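/- Let a ∈ ℕ_+^n be a positive weight and τ a monomial order on R = K[X_1,...,X_n], and V a K-subspace of R. If in_τ(V) ⊆ in_a(V) or in_τ(V) ⊇ in_a(V), then in_τ(V) = in_a(V). -/

import Mathlib

open MvPolynomial

/-- The `a`-degree of a polynomial: the maximal `a`-weighted degree of a monomial of `f`. -/
def wdeg {K : Type*} [CommSemiring K] {n : ℕ} (a : Fin n → ℕ)
    (f : MvPolynomial (Fin n) K) : ℕ :=
  f.support.sup (fun e => ∑ i, a i * e i)

/-- The initial form `in_a(f)`: the sum of the terms of `f` of maximal `a`-degree. -/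
noncomputable def iniForm {K : Type*} [CommSemiring K] {n : ℕ} (a : Fin n → ℕ)
    (f : MvPolynomial (Fin n) K) : MvPolynomial (Fin n) K :=
  ∑ e ∈ f.support.filter (fun e => (∑ i, a i * e i) = wdeg a f), monomial e (coeff e f)

/-- The `a`-homogenization `hom_a(f)` of `f`, an element of `S = R[t]`. -/
noncomputable def homog {K : Type*} [CommSemiring K] {n : ℕ} (a : Fin n → ℕ)
    (f : MvPolynomial (Fin n) K) : Polynomial (MvPolynomial (Fin n) K) :=
  ∑ e ∈ f.support,
    Polynomial.C (monomial e (coeff e f)) * Polynomial.X ^ (wdeg a f - ∑ i, a i * e i)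

/-- The exponent of the initial monomial of `f` with respect to the monomial order `m`. -/
noncomputable def MonomialOrder.inExp {σ K : Type*} [CommSemiring K] (m : MonomialOrder σ)
    (f : MvPolynomial σ K) : σ →₀ ℕ :=
  m.toSyn.symm (f.support.sup m.toSyn)

/-- The initial space `in_τ(V)`: the `K`-span of the initial monomials of nonzero
elements of `V`. -/
noncomputable def iniSpace {K : Type*} [Field K] {n : ℕ} (m : MonomialOrder (Fin n))
    (V : Submodule K (MvPolynomial (Fin n) K)) : Submodule K (MvPolynomial (Fin n) K) :=
  Submodule.span K {q | ∃ f ∈ V, f ≠ 0 ∧ q = monomial (m.inExp f) (1 : K)}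

/-- The space `in_a(V)` of initial forms: the `K`-span of `in_a(f)` for nonzero `f ∈ V`. -/
noncomputable def iniFormSpace {K : Type*} [Field K] {n : ℕ} (a : Fin n → ℕ)
    (V : Submodule K (MvPolynomial (Fin n) K)) : Submodule K (MvPolynomial (Fin n) K) :=
  Submodule.span K {q | ∃ f ∈ V, f ≠ 0 ∧ q = iniForm a f}

/-- `m'` is the refinement `τa` of the weight `a` by the monomial order `m = τ`. -/
def IsRefinement {n : ℕ} (a : Fin n → ℕ) (m m' : MonomialOrder (Fin n)) : Prop :=
  ∀ d e : Fin n →₀ ℕ, (m'.toSyn d < m'.toSyn e ↔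
    ((∑ i, a i * d i) < ∑ i, a i * e i ∨
      ((∑ i, a i * d i) = (∑ i, a i * e i) ∧ m.toSyn d < m.toSyn e)))

namespace IniGrob

open MvPolynomial

variable {n : ℕ}

/-- weighted degree of an exponent -/
abbrev degA (a : Fin n → ℕ) (e : Fin n →₀ ℕ) : ℕ := ∑ i, a i * e i

lemma degA_add (a : Fin n → ℕ) (d e : Fin n →₀ ℕ) :
    degA a (d + e) = degA a d + degA a e := by
  simp [degA, Finsupp.add_apply, mul_add, Finset.sum_add_distrib]

section WSyn

variable (a : Fin n → ℕ) (m : MonomialOrder (Fin n))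

/-- Type synonym for the synonym type of the refinement order. -/
def WSyn (_a : Fin n → ℕ) (_m : MonomialOrder (Fin n)) : Type _ := Fin n →₀ ℕ

noncomputable instance : AddCommMonoid (WSyn a m) := inferInstanceAs (AddCommMonoid (Fin n →₀ ℕ))

/-- comparison map -/
noncomputable def phi : WSyn a m → ℕ ×ₗ m.syn := fun e => toLex (degA a e, m.toSyn e)

lemma phi_inj : Function.Injective (phi a m) := by
  intro x y h
  have h2 := congrArg (fun p => (ofLex p).2) h
  exact m.toSyn.injective h2

noncomputable instance : LinearOrder (WSyn a m) := LinearOrder.lift' (phi a m) (phi_inj a m)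

lemma wsyn_le_iff {x y : WSyn a m} : x ≤ y ↔ phi a m x ≤ phi a m y := Iff.rfl
lemma wsyn_lt_iff {x y : WSyn a m} : x < y ↔ phi a m x < phi a m y := Iff.rfl

lemma phi_add (x y : WSyn a m) : phi a m (x + y) = phi a m x + phi a m y := by
  have h : ((degA a (x + y), m.toSyn (x + y)) : ℕ × m.syn)
      = ((degA a x, m.toSyn x) : ℕ × m.syn) + ((degA a y, m.toSyn y) : ℕ × m.syn) := by
    ext
    · exact degA_add a x y
    · exact map_add m.toSyn x y
  exact congrArg toLex h

noncomputable instance : IsOrderedCancelAddMonoid (WSyn a m) :=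
  { add_le_add_left := fun x y h c => by
      rw [wsyn_le_iff] at h ⊢
      rw [phi_add, phi_add]
      exact add_le_add h le_rfl
    le_of_add_le_add_left := fun x y c h => by
      rw [wsyn_le_iff] at h ⊢
      rw [phi_add, phi_add] at h
      exact le_of_add_le_add_left h }

instance : WellFoundedLT (WSyn a m) := by
  constructor
  have hwf : WellFounded ((· < ·) : (ℕ ×ₗ m.syn) → (ℕ ×ₗ m.syn) → Prop) := IsWellFounded.wf
  exact Subrelation.wf (fun {x y} h => (wsyn_lt_iff a m).mp h) (InvImage.wf (phi a m) hwf)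

/-- The refinement of the weight `a` by the monomial order `m`. -/
noncomputable def refine : MonomialOrder (Fin n) where
  syn := WSyn a m
  toSyn :=
  { toFun := fun x => x
    invFun := fun x => x
    left_inv := fun _ => rfl
    right_inv := fun _ => rfl
    map_add' := fun _ _ => rfl }
  toSyn_monotone := by
    intro d e h
    change phi a m d ≤ phi a m e
    have hd : degA a d ≤ degA a e := by
      refine Finset.sum_le_sum fun i _ => Nat.mul_le_mul_left _ ?_
      exact h i
    refine Prod.Lex.le_iff.mpr ?_
    rcases eq_or_lt_of_le hd with heq | hlt
    · exact Or.inr ⟨heq, m.toSyn_monotone h⟩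
    · exact Or.inl hlt

lemma refine_lt_iff {d e : Fin n →₀ ℕ} :
    (refine a m).toSyn d < (refine a m).toSyn e ↔
      (degA a d < degA a e ∨ (degA a d = degA a e ∧ m.toSyn d < m.toSyn e)) := by
  change phi a m d < phi a m e ↔ _
  exact Prod.Lex.lt_iff

lemma refine_deg_lt {d e : Fin n →₀ ℕ} (h : degA a d < degA a e) :
    (refine a m).toSyn d < (refine a m).toSyn e :=
  (refine_lt_iff a m).mpr (Or.inl h)

lemma refine_le_iff_of_deg_eq {d e : Fin n →₀ ℕ} (h : degA a d = degA a e) :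
    ((refine a m).toSyn d ≤ (refine a m).toSyn e ↔ m.toSyn d ≤ m.toSyn e) := by
  rw [← not_lt, ← not_lt (a := m.toSyn e) (b := m.toSyn d), refine_lt_iff]
  simp [h, lt_irrefl]

end WSyn

end IniGrob
namespace IniGrob

open MvPolynomial

variable {K : Type*} [Field K] {n : ℕ}

section InExp

variable (m : MonomialOrder (Fin n))

lemma toSyn_inExp (f : MvPolynomial (Fin n) K) :
    m.toSyn (m.inExp f) = f.support.sup m.toSyn := by
  rw [MonomialOrder.inExp, AddEquiv.apply_symm_apply]

lemma inExp_mem_support {f : MvPolynomial (Fin n) K} (hf : f ≠ 0) :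
    m.inExp f ∈ f.support := by
  obtain ⟨e, he, hsup⟩ := Finset.exists_mem_eq_sup f.support
    (MvPolynomial.support_nonempty.mpr hf) m.toSyn
  have : m.inExp f = e := by rw [MonomialOrder.inExp, hsup, AddEquiv.symm_apply_apply]
  rwa [this]

lemma coeff_inExp_ne_zero {f : MvPolynomial (Fin n) K} (hf : f ≠ 0) :
    coeff (m.inExp f) f ≠ 0 :=
  MvPolynomial.mem_support_iff.mp (inExp_mem_support m hf)

lemma le_toSyn_inExp {f : MvPolynomial (Fin n) K} {e : Fin n →₀ ℕ} (he : e ∈ f.support) :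
    m.toSyn e ≤ m.toSyn (m.inExp f) := by
  rw [toSyn_inExp]
  exact Finset.le_sup he

lemma inExp_eq_of {f : MvPolynomial (Fin n) K} {e : Fin n →₀ ℕ}
    (h0 : coeff e f ≠ 0) (hle : ∀ e' ∈ f.support, m.toSyn e' ≤ m.toSyn e) :
    m.inExp f = e := by
  apply m.toSyn.injective
  apply le_antisymm
  · rw [toSyn_inExp]
    exact Finset.sup_le hle
  · exact le_toSyn_inExp m (MvPolynomial.mem_support_iff.mpr h0)

lemma toSyn_inExp_lt_of {f : MvPolynomial (Fin n) K} {e : Fin n →₀ ℕ}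
    (hf : f ≠ 0) (hce : coeff e f = 0)
    (hle : ∀ e' ∈ f.support, m.toSyn e' ≤ m.toSyn e) :
    m.toSyn (m.inExp f) < m.toSyn e := by
  refine lt_of_le_of_ne (hle _ (inExp_mem_support m hf)) fun heq => ?_
  have : m.inExp f = e := m.toSyn.injective heq
  exact coeff_inExp_ne_zero m hf (this ▸ hce)

lemma inExp_monomial (e : Fin n →₀ ℕ) :
    m.inExp (monomial e (1 : K)) = e := by
  refine inExp_eq_of m ?_ ?_
  · simp [coeff_monomial]
  · intro e' he'
    classical
    rw [MvPolynomial.support_monomial, if_neg (one_ne_zero)] at he'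
    rw [Finset.mem_singleton.mp he']

end InExp

section IniFormLemmas

variable (a : Fin n → ℕ)

lemma degA_le_wdeg {f : MvPolynomial (Fin n) K} {e : Fin n →₀ ℕ} (he : e ∈ f.support) :
    degA a e ≤ wdeg a f :=
  Finset.le_sup (f := fun e => ∑ i, a i * e i) he

lemma exists_wdeg_eq {f : MvPolynomial (Fin n) K} (hf : f ≠ 0) :
    ∃ e ∈ f.support, degA a e = wdeg a f := by
  obtain ⟨e, he, hsup⟩ := Finset.exists_mem_eq_sup f.support
    (MvPolynomial.support_nonempty.mpr hf) (fun e => ∑ i, a i * e i)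
  exact ⟨e, he, hsup.symm⟩

/-- The `a`-homogeneous component of degree `d`. -/
noncomputable def compFun (a : Fin n → ℕ) (d : ℕ) (f : MvPolynomial (Fin n) K) :
    MvPolynomial (Fin n) K :=
  ∑ e ∈ f.support.filter (fun e => degA a e = d), monomial e (coeff e f)

lemma coeff_compFun (d : ℕ) (f : MvPolynomial (Fin n) K) (e : Fin n →₀ ℕ) :
    coeff e (compFun a d f) = if degA a e = d then coeff e f else 0 := by
  rw [compFun, MvPolynomial.coeff_sum]
  simp_rw [coeff_monomial]
  rw [Finset.sum_ite_eq' (f.support.filter (fun e' => degA a e' = d)) e (fun e' => coeff e' f)]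
  by_cases h2 : e ∈ f.support
  · simp [Finset.mem_filter, h2]
  · have h0 : coeff e f = 0 := MvPolynomial.notMem_support_iff.mp h2
    simp [Finset.mem_filter, h2, h0]

/-- The `a`-homogeneous component of degree `d`, as a linear map. -/
noncomputable def compA (a : Fin n → ℕ) (d : ℕ) :
    MvPolynomial (Fin n) K →ₗ[K] MvPolynomial (Fin n) K where
  toFun f := compFun a d f
  map_add' := by
    intro f g
    apply MvPolynomial.ext
    intro e
    rw [MvPolynomial.coeff_add, coeff_compFun, coeff_compFun, coeff_compFun,
      MvPolynomial.coeff_add]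
    split_ifs with h
    · rfl
    · simp
  map_smul' := by
    intro c f
    apply MvPolynomial.ext
    intro e
    rw [RingHom.id_apply, MvPolynomial.coeff_smul, coeff_compFun, coeff_compFun,
      MvPolynomial.coeff_smul]
    split_ifs with h
    · rfl
    · simp

lemma coeff_compA (d : ℕ) (f : MvPolynomial (Fin n) K) (e : Fin n →₀ ℕ) :
    coeff e (compA a d f) = if degA a e = d then coeff e f else 0 :=
  coeff_compFun a d f e

end IniFormLemmas

end IniGrob
namespace IniGrob

open MvPolynomial

variable {K : Type*} [Field K] {n : ℕ}

variable (a : Fin n → ℕ)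

lemma iniForm_eq_compA (f : MvPolynomial (Fin n) K) :
    iniForm a f = compA a (wdeg a f) f := rfl

lemma coeff_iniForm (f : MvPolynomial (Fin n) K) (e : Fin n →₀ ℕ) :
    coeff e (iniForm a f) = if degA a e = wdeg a f then coeff e f else 0 :=
  coeff_compFun a (wdeg a f) f e

lemma iniForm_ne_zero {f : MvPolynomial (Fin n) K} (hf : f ≠ 0) :
    iniForm a f ≠ 0 := by
  obtain ⟨e, he, hd⟩ := exists_wdeg_eq a hf
  intro hc
  have := coeff_iniForm a f e
  rw [hc, if_pos hd] at this
  exact MvPolynomial.mem_support_iff.mp he this.symm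

lemma support_iniForm_subset (f : MvPolynomial (Fin n) K) :
    (iniForm a f).support ⊆ f.support := by
  intro e he
  rw [MvPolynomial.mem_support_iff, coeff_iniForm] at he
  rw [MvPolynomial.mem_support_iff]
  intro hc
  apply he
  split_ifs <;> simp [hc]

lemma degA_of_mem_support_iniForm {f : MvPolynomial (Fin n) K} {e : Fin n →₀ ℕ}
    (he : e ∈ (iniForm a f).support) : degA a e = wdeg a f := by
  rw [MvPolynomial.mem_support_iff, coeff_iniForm] at he
  by_contra hc
  exact he (if_neg hc)

lemma coeff_iniForm_of_deg {f : MvPolynomial (Fin n) K} {e : Fin n →₀ ℕ}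
    (hd : degA a e = wdeg a f) : coeff e (iniForm a f) = coeff e f := by
  rw [coeff_iniForm, if_pos hd]

lemma compA_iniForm_of_eq {f : MvPolynomial (Fin n) K} {d : ℕ} (h : wdeg a f = d) :
    compA a d (iniForm a f) = iniForm a f := by
  subst h
  apply MvPolynomial.ext
  intro e
  rw [coeff_compA]
  split_ifs with h1
  · rfl
  · rw [coeff_iniForm, if_neg h1]

lemma compA_iniForm_of_ne {f : MvPolynomial (Fin n) K} {d : ℕ} (h : wdeg a f ≠ d) :
    compA a d (iniForm a f) = 0 := by
  apply MvPolynomial.ext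
  intro e
  rw [coeff_compA, MvPolynomial.coeff_zero]
  split_ifs with h1
  · rw [coeff_iniForm, if_neg]
    rw [h1]
    exact fun hc => h hc.symm
  · rfl

/-- members of a span of degree-`d` initial forms are themselves initial forms -/
lemma exists_iniForm_eq {V : Submodule K (MvPolynomial (Fin n) K)} {d : ℕ}
    {g : MvPolynomial (Fin n) K} (hg : g ≠ 0)
    (hmem : g ∈ Submodule.span K
      {q | ∃ f, f ∈ V ∧ f ≠ 0 ∧ wdeg a f = d ∧ q = iniForm a f}) :
    ∃ F, F ∈ V ∧ F ≠ 0 ∧ wdeg a F = d ∧ iniForm a F = g := by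
  rw [Submodule.mem_span_set'] at hmem
  obtain ⟨k, c, v, hsum⟩ := hmem
  choose f hfV hf0 hwdeg hini using fun i => (v i).2
  set F : MvPolynomial (Fin n) K := ∑ i, c i • f i with hF
  have hcompF : compA a d F = g := by
    rw [hF, map_sum, ← hsum]
    refine Finset.sum_congr rfl fun i _ => ?_
    rw [map_smul, hini i, iniForm_eq_compA, hwdeg i]
  have hFV : F ∈ V := Submodule.sum_mem V fun i _ => Submodule.smul_mem V _ (hfV i)
  have hF0 : F ≠ 0 := by
    intro hc
    rw [hc, map_zero] at hcompF
    exact hg hcompF.symm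
  have hdegle : ∀ e ∈ F.support, degA a e ≤ d := by
    intro e he
    rw [MvPolynomial.mem_support_iff] at he
    have : ∃ i : Fin k, coeff e (f i) ≠ 0 := by
      by_contra hc
      push_neg at hc
      apply he
      rw [hF, MvPolynomial.coeff_sum]
      refine Finset.sum_eq_zero fun i _ => ?_
      rw [MvPolynomial.coeff_smul, hc i, smul_zero]
    obtain ⟨i, hi⟩ := this
    calc degA a e ≤ wdeg a (f i) :=
          degA_le_wdeg a (MvPolynomial.mem_support_iff.mpr hi)
      _ = d := hwdeg i
  have hwF : wdeg a F = d := by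
    apply le_antisymm
    · exact Finset.sup_le hdegle
    · obtain ⟨e, he⟩ := MvPolynomial.ne_zero_iff.mp hg
      have h1 := coeff_compA a d F e
      rw [hcompF] at h1
      have hdeg : degA a e = d := by
        by_contra hc
        rw [if_neg hc] at h1
        exact he h1
      rw [if_pos hdeg] at h1
      have : e ∈ F.support := MvPolynomial.mem_support_iff.mpr (fun hc => he (h1.trans hc))
      calc d = degA a e := hdeg.symm
        _ ≤ wdeg a F := degA_le_wdeg a this
  refine ⟨F, hFV, hF0, hwF, ?_⟩
  rw [iniForm_eq_compA, hwF, hcompF]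

lemma compA_mem_span {V : Submodule K (MvPolynomial (Fin n) K)} {d : ℕ}
    {g : MvPolynomial (Fin n) K} (hg : g ∈ iniFormSpace a V) :
    compA a d g ∈ Submodule.span K
      {q | ∃ f, f ∈ V ∧ f ≠ 0 ∧ wdeg a f = d ∧ q = iniForm a f} := by
  have h1 : compA a d g ∈ Submodule.map (compA a d) (iniFormSpace a V) :=
    Submodule.mem_map_of_mem hg
  rw [iniFormSpace, Submodule.map_span] at h1
  refine Submodule.span_le.mpr ?_ h1
  rintro q ⟨p, ⟨f, hfV, hf0, rfl⟩, rfl⟩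
  by_cases hd : wdeg a f = d
  · rw [compA_iniForm_of_eq a hd]
    exact Submodule.subset_span ⟨f, hfV, hf0, hd, rfl⟩
  · rw [compA_iniForm_of_ne a hd]
    exact Submodule.zero_mem _

/-- taking the top component with respect to the degree of the initial exponent
preserves the initial exponent -/
lemma inExp_compA (m2 : MonomialOrder (Fin n)) {g : MvPolynomial (Fin n) K} (hg : g ≠ 0) :
    compA a (degA a (m2.inExp g)) g ≠ 0 ∧
      m2.inExp (compA a (degA a (m2.inExp g)) g) = m2.inExp g := by
  set e := m2.inExp g
  have hce : coeff e (compA a (degA a e) g) = coeff e g := by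
    rw [coeff_compA, if_pos rfl]
  have hne : coeff e (compA a (degA a e) g) ≠ 0 := by
    rw [hce]; exact coeff_inExp_ne_zero m2 hg
  have hsub : (compA a (degA a e) g).support ⊆ g.support := by
    intro e' he'
    rw [MvPolynomial.mem_support_iff, coeff_compA] at he'
    rw [MvPolynomial.mem_support_iff]
    intro hc
    apply he'
    split_ifs <;> simp [hc]
  constructor
  · exact fun hc => hne (by rw [hc, MvPolynomial.coeff_zero])
  · exact inExp_eq_of m2 hne fun e' he' => le_toSyn_inExp m2 (hsub he')

end IniGrob
namespace IniGrob

open MvPolynomial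

variable {K : Type*} [Field K] {n : ℕ}

/-- K1: the initial exponent of the initial form -/
lemma inExp_iniForm (a : Fin n → ℕ) (m m2 : MonomialOrder (Fin n))
    (hagree : ∀ d e : Fin n →₀ ℕ, degA a d = degA a e →
      (m2.toSyn d ≤ m2.toSyn e ↔ m.toSyn d ≤ m.toSyn e))
    {f : MvPolynomial (Fin n) K} (hf : f ≠ 0) :
    m2.inExp (iniForm a f) = (refine a m).inExp f := by
  set E := (refine a m).inExp f with hE
  have hEs : E ∈ f.support := inExp_mem_support _ hf
  have hdeg : degA a E = wdeg a f := by
    refine le_antisymm (degA_le_wdeg a hEs) ?_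
    obtain ⟨e0, he0, hd0⟩ := exists_wdeg_eq a hf
    by_contra hc
    push_neg at hc
    have hlt := refine_deg_lt a m (d := E) (e := e0) (by rw [hd0]; exact hc)
    exact absurd (le_toSyn_inExp (refine a m) he0) (not_le.mpr hlt)
  have hcE : coeff E (iniForm a f) ≠ 0 := by
    rw [coeff_iniForm_of_deg a hdeg]
    exact MvPolynomial.mem_support_iff.mp hEs
  refine inExp_eq_of m2 hcE ?_
  intro e' he'
  have hd' : degA a e' = degA a E := (degA_of_mem_support_iniForm a he').trans hdeg.symm
  rw [hagree _ _ hd']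
  have h1 : (refine a m).toSyn e' ≤ (refine a m).toSyn E :=
    le_toSyn_inExp _ (support_iniForm_subset a f he')
  exact (refine_le_iff_of_deg_eq a m hd').mp h1

/-- the set of initial exponents -/
def expSet (m2 : MonomialOrder (Fin n)) (V : Submodule K (MvPolynomial (Fin n) K)) :
    Set (Fin n →₀ ℕ) :=
  {e | ∃ f, f ∈ V ∧ f ≠ 0 ∧ m2.inExp f = e}

lemma iniSpace_eq_span (m2 : MonomialOrder (Fin n)) (V : Submodule K (MvPolynomial (Fin n) K)) :
    iniSpace m2 V = Submodule.span K ((fun e => (monomial e (1 : K))) '' expSet m2 V) := by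
  rw [iniSpace]
  congr 1
  ext q
  constructor
  · rintro ⟨f, hfV, hf0, rfl⟩
    exact ⟨m2.inExp f, ⟨f, hfV, hf0, rfl⟩, rfl⟩
  · rintro ⟨e, ⟨f, hfV, hf0, rfl⟩, rfl⟩
    exact ⟨f, hfV, hf0, rfl⟩

lemma support_subset_of_mem_monomial_span {E : Set (Fin n →₀ ℕ)} {p : MvPolynomial (Fin n) K}
    (hp : p ∈ Submodule.span K ((fun e => (monomial e (1 : K))) '' E)) :
    ↑p.support ⊆ E := by
  classical
  induction hp using Submodule.span_induction with
  | mem x hx =>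
    obtain ⟨e, he, rfl⟩ := hx
    intro e' he'
    rw [Finset.mem_coe, MvPolynomial.support_monomial, if_neg one_ne_zero,
      Finset.mem_singleton] at he'
    rwa [he']
  | zero => simp
  | add x y hx hy ihx ihy =>
    intro e' he'
    rcases Finset.mem_union.mp (MvPolynomial.support_add he') with h | h
    · exact ihx h
    · exact ihy h
  | smul c x hx ihx =>
    intro e' he'
    exact ihx (MvPolynomial.support_smul he')

lemma mem_expSet_of_monomial_mem {m2 : MonomialOrder (Fin n)}
    {V : Submodule K (MvPolynomial (Fin n) K)} {e : Fin n →₀ ℕ}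
    (h : (monomial e (1 : K)) ∈ iniSpace m2 V) : e ∈ expSet m2 V := by
  classical
  rw [iniSpace_eq_span] at h
  refine support_subset_of_mem_monomial_span h ?_
  rw [Finset.mem_coe, MvPolynomial.support_monomial, if_neg one_ne_zero]
  exact Finset.mem_singleton_self e

lemma iniSpace_mono (m2 : MonomialOrder (Fin n)) {V W : Submodule K (MvPolynomial (Fin n) K)}
    (h : V ≤ W) : iniSpace m2 V ≤ iniSpace m2 W := by
  apply Submodule.span_mono
  rintro q ⟨f, hfV, hf0, rfl⟩
  exact ⟨f, h hfV, hf0, rfl⟩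

lemma expSet_subset_of_le {m2 m3 : MonomialOrder (Fin n)}
    {V W : Submodule K (MvPolynomial (Fin n) K)}
    (h : iniSpace m2 V ≤ iniSpace m3 W) : expSet m2 V ⊆ expSet m3 W := by
  rintro e ⟨f, hfV, hf0, rfl⟩
  apply mem_expSet_of_monomial_mem
  apply h
  exact Submodule.subset_span ⟨f, hfV, hf0, rfl⟩

/-- K2 -/
lemma iniSpace_iniFormSpace (a : Fin n → ℕ) (m2 m3 : MonomialOrder (Fin n))
    (V : Submodule K (MvPolynomial (Fin n) K))
    (hk : ∀ f : MvPolynomial (Fin n) K, f ≠ 0 → m2.inExp (iniForm a f) = m3.inExp f) :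
    iniSpace m2 (iniFormSpace a V) = iniSpace m3 V := by
  apply le_antisymm
  · rw [iniSpace]
    refine Submodule.span_le.mpr ?_
    rintro q ⟨g, hgW, hg0, rfl⟩
    obtain ⟨hne, hin⟩ := inExp_compA a m2 hg0
    have hspan := compA_mem_span a (d := degA a (m2.inExp g)) hgW
    obtain ⟨F, hFV, hF0, hFw, hFini⟩ := exists_iniForm_eq a hne hspan
    have heq : m2.inExp g = m3.inExp F := by
      rw [← hk F hF0, hFini, hin]
    exact Submodule.subset_span ⟨F, hFV, hF0, by rw [heq]⟩
  · refine Submodule.span_le.mpr ?_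
    rintro q ⟨f, hfV, hf0, rfl⟩
    refine Submodule.subset_span ⟨iniForm a f, ?_, iniForm_ne_zero a hf0, ?_⟩
    · exact Submodule.subset_span ⟨f, hfV, hf0, rfl⟩
    · rw [hk f hf0]

/-- Lemma M : monomial spaces are their own initial spaces -/
lemma iniSpace_iniSpace (m2 m3 : MonomialOrder (Fin n))
    (V : Submodule K (MvPolynomial (Fin n) K)) :
    iniSpace m2 (iniSpace m3 V) = iniSpace m3 V := by
  classical
  apply le_antisymm
  · refine Submodule.span_le.mpr ?_
    rintro q ⟨p, hpW, hp0, rfl⟩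
    have hsupp : ↑p.support ⊆ expSet m3 V := by
      refine support_subset_of_mem_monomial_span ?_
      rwa [iniSpace_eq_span] at hpW
    obtain ⟨f, hfV, hf0, hfe⟩ := hsupp (Finset.mem_coe.mpr (inExp_mem_support m2 hp0))
    exact Submodule.subset_span ⟨f, hfV, hf0, by rw [hfe]⟩
  · refine Submodule.span_le.mpr ?_
    rintro q ⟨f, hfV, hf0, rfl⟩
    have hqW : (monomial (m3.inExp f) (1 : K)) ∈ iniSpace m3 V :=
      Submodule.subset_span ⟨f, hfV, hf0, rfl⟩
    have hq0 : (monomial (m3.inExp f) (1 : K)) ≠ 0 := by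
      intro hc
      have := MvPolynomial.monomial_eq_zero.mp hc
      exact one_ne_zero this
    exact Submodule.subset_span ⟨_, hqW, hq0, by rw [inExp_monomial]⟩

end IniGrob
namespace IniGrob

open MvPolynomial

variable {K : Type*} [Field K] {n : ℕ}

/-- reduction modulo `V` to a normal form supported outside the initial exponents -/
lemma exists_reduction (m2 : MonomialOrder (Fin n)) (V : Submodule K (MvPolynomial (Fin n) K))
    (p : MvPolynomial (Fin n) K) :
    ∃ v ∈ V, ∀ e ∈ (p - v).support, e ∉ expSet m2 V := by
  classical
  suffices H : ∀ s : m2.syn, ∀ p : MvPolynomial (Fin n) K, m2.toSyn (m2.inExp p) = s →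
      ∃ v ∈ V, ∀ e ∈ (p - v).support, e ∉ expSet m2 V from H _ p rfl
  intro s
  induction s using WellFoundedLT.induction with
  | _ s IH =>
  intro p hp
  by_cases hp0 : p = 0
  · exact ⟨0, V.zero_mem, by simp [hp0]⟩
  by_cases hE : m2.inExp p ∈ expSet m2 V
  · obtain ⟨f, hfV, hf0, hfe⟩ := hE
    have hcf : coeff (m2.inExp p) f ≠ 0 := by
      rw [← hfe]; exact coeff_inExp_ne_zero m2 hf0
    set c := coeff (m2.inExp p) p / coeff (m2.inExp p) f with hc
    set p' := p - c • f with hp'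
    have hsupp' : ∀ e' ∈ p'.support, m2.toSyn e' ≤ m2.toSyn (m2.inExp p) := by
      intro e' he'
      rcases Finset.mem_union.mp (MvPolynomial.support_sub _ p (c • f) he') with h1 | h1
      · exact le_toSyn_inExp m2 h1
      · have h2 := MvPolynomial.support_smul h1
        have h3 := le_toSyn_inExp m2 h2
        rwa [hfe] at h3
    have hce' : coeff (m2.inExp p) p' = 0 := by
      rw [hp', MvPolynomial.coeff_sub, MvPolynomial.coeff_smul, hc, smul_eq_mul,
        div_mul_cancel₀ _ hcf, sub_self]
    by_cases hp'0 : p' = 0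
    · refine ⟨c • f, Submodule.smul_mem V c hfV, ?_⟩
      intro e' he'
      rw [show p - c • f = p' from rfl, hp'0] at he'
      simp at he'
    · have hlt : m2.toSyn (m2.inExp p') < s := by
        rw [← hp]
        exact toSyn_inExp_lt_of m2 hp'0 hce' hsupp'
      obtain ⟨v', hv'V, hv'⟩ := IH _ hlt p' rfl
      refine ⟨v' + c • f, V.add_mem hv'V (Submodule.smul_mem V c hfV), ?_⟩
      intro e' he'
      have hre : p - (v' + c • f) = p' - v' := by
        rw [hp', sub_add_eq_sub_sub, sub_right_comm]
      rw [hre] at he'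
      exact hv' e' he'
  · set p' := p - monomial (m2.inExp p) (coeff (m2.inExp p) p) with hp'
    have hsupp' : ∀ e' ∈ p'.support, m2.toSyn e' ≤ m2.toSyn (m2.inExp p) := by
      intro e' he'
      rcases Finset.mem_union.mp
          (MvPolynomial.support_sub _ p (monomial (m2.inExp p) (coeff (m2.inExp p) p)) he')
        with h1 | h1
      · exact le_toSyn_inExp m2 h1
      · rw [MvPolynomial.support_monomial] at h1
        split_ifs at h1 with h2
        · simp at h1
        · rw [Finset.mem_singleton.mp h1]
    have hce' : coeff (m2.inExp p) p' = 0 := by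
      rw [hp', MvPolynomial.coeff_sub, coeff_monomial, if_pos rfl, sub_self]
    by_cases hp'0 : p' = 0
    · refine ⟨0, V.zero_mem, ?_⟩
      intro e' he'
      rw [sub_zero] at he'
      have hpm : p = monomial (m2.inExp p) (coeff (m2.inExp p) p) := by
        rw [hp', sub_eq_zero] at hp'0
        exact hp'0
      rw [hpm] at he'
      rw [MvPolynomial.support_monomial] at he'
      split_ifs at he' with h2
      · simp at he'
      · rwa [Finset.mem_singleton.mp he']
    · have hlt : m2.toSyn (m2.inExp p') < s := by
        rw [← hp]
        exact toSyn_inExp_lt_of m2 hp'0 hce' hsupp'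
      obtain ⟨v', hv'V, hv'⟩ := IH _ hlt p' rfl
      refine ⟨v', hv'V, ?_⟩
      intro e' he'
      have hsplit : p - v' = (p' - v') + monomial (m2.inExp p) (coeff (m2.inExp p) p) := by
        rw [hp', sub_right_comm, sub_add_cancel]
      rw [hsplit] at he'
      rcases Finset.mem_union.mp (MvPolynomial.support_add he') with h1 | h1
      · exact hv' e' h1
      · rw [MvPolynomial.support_monomial] at h1
        split_ifs at h1 with h2
        · simp at h1
        · rwa [Finset.mem_singleton.mp h1]

lemma expSet_antisymm (m1 m2 : MonomialOrder (Fin n)) (V : Submodule K (MvPolynomial (Fin n) K))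
    (hsub : expSet m1 V ⊆ expSet m2 V) : expSet m2 V ⊆ expSet m1 V := by
  classical
  intro e he2
  by_contra he1
  obtain ⟨v, hvV, hv⟩ := exists_reduction m2 V (monomial e (1 : K))
  set u := monomial e (1 : K) - v with hu
  have hv0 : v = 0 := by
    by_contra hvne
    have hmem : m1.inExp v ∈ expSet m1 V := ⟨v, hvV, hvne, rfl⟩
    have hsupp : m1.inExp v ∈ v.support := inExp_mem_support m1 hvne
    have hvsplit : v = monomial e (1 : K) - u := by rw [hu, sub_sub_cancel]
    have h1 : m1.inExp v ∈ (monomial e (1 : K)).support ∪ u.support := by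
      apply MvPolynomial.support_sub
      rw [← hvsplit]
      exact hsupp
    rcases Finset.mem_union.mp h1 with h1 | h1
    · rw [MvPolynomial.support_monomial, if_neg one_ne_zero, Finset.mem_singleton] at h1
      rw [h1] at hmem
      exact he1 hmem
    · exact hv _ h1 (hsub hmem)
  apply hv e _ he2
  rw [hu, hv0, sub_zero, MvPolynomial.support_monomial, if_neg one_ne_zero]
  exact Finset.mem_singleton_self e

/-- G4 : nested subspaces with equal initial spaces coincide -/
lemma eq_of_le_of_iniSpace_eq (m2 : MonomialOrder (Fin n))
    {W W' : Submodule K (MvPolynomial (Fin n) K)}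
    (hWW : W ≤ W') (hini : iniSpace m2 W = iniSpace m2 W') : W = W' := by
  refine le_antisymm hWW ?_
  intro f hf
  suffices H : ∀ s : m2.syn, ∀ f : MvPolynomial (Fin n) K, f ∈ W' →
      m2.toSyn (m2.inExp f) = s → f ∈ W from H _ f hf rfl
  intro s
  induction s using WellFoundedLT.induction with
  | _ s IH =>
  intro f hfW' hs
  by_cases hf0 : f = 0
  · rw [hf0]; exact W.zero_mem
  have hq : (monomial (m2.inExp f) (1 : K)) ∈ iniSpace m2 W := by
    rw [hini]
    exact Submodule.subset_span ⟨f, hfW', hf0, rfl⟩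
  obtain ⟨g, hgW, hg0, hge⟩ := mem_expSet_of_monomial_mem hq
  have hcg : coeff (m2.inExp f) g ≠ 0 := by
    rw [← hge]; exact coeff_inExp_ne_zero m2 hg0
  set c := coeff (m2.inExp f) f / coeff (m2.inExp f) g with hc
  set f' := f - c • g with hf'
  by_cases hf'0 : f' = 0
  · have : f = c • g := by rwa [hf', sub_eq_zero] at hf'0
    rw [this]
    exact Submodule.smul_mem W c hgW
  · have hsupp' : ∀ e' ∈ f'.support, m2.toSyn e' ≤ m2.toSyn (m2.inExp f) := by
      intro e' he'
      rcases Finset.mem_union.mp (MvPolynomial.support_sub _ f (c • g) he') with h1 | h1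
      · exact le_toSyn_inExp m2 h1
      · have h2 := MvPolynomial.support_smul h1
        have h3 := le_toSyn_inExp m2 h2
        rwa [hge] at h3
    have hce' : coeff (m2.inExp f) f' = 0 := by
      rw [hf', MvPolynomial.coeff_sub, MvPolynomial.coeff_smul, hc, smul_eq_mul,
        div_mul_cancel₀ _ hcg, sub_self]
    have hlt : m2.toSyn (m2.inExp f') < s := by
      rw [← hs]
      exact toSyn_inExp_lt_of m2 hf'0 hce' hsupp'
    have hf'W : f' ∈ W :=
      IH _ hlt f' (Submodule.sub_mem W' hfW' (Submodule.smul_mem W' c (hWW hgW))) rfl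
    have hfe : f = f' + c • g := by rw [hf', sub_add_cancel]
    rw [hfe]
    exact W.add_mem hf'W (Submodule.smul_mem W c hgW)

end IniGrob

theorem iniSpace_eq_iniFormSpace' {K : Type*} [Field K] {n : ℕ} (a : Fin n → ℕ)
    (m : MonomialOrder (Fin n))
    (V : Submodule K (MvPolynomial (Fin n) K))
    (h : iniSpace m V ≤ iniFormSpace a V ∨ iniFormSpace a V ≤ iniSpace m V) :
    iniSpace m V = iniFormSpace a V := by
  classical
  set mR := IniGrob.refine a m with hmR
  have hk : ∀ f : MvPolynomial (Fin n) K, f ≠ 0 → m.inExp (iniForm a f) = mR.inExp f :=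
    fun f hf => IniGrob.inExp_iniForm a m m (fun d e _ => Iff.rfl) hf
  have hK2 : iniSpace m (iniFormSpace a V) = iniSpace mR V :=
    IniGrob.iniSpace_iniFormSpace a m mR V hk
  have hM : iniSpace m (iniSpace m V) = iniSpace m V := IniGrob.iniSpace_iniSpace m m V
  rcases h with h1 | h1
  · have hmono : iniSpace m (iniSpace m V) ≤ iniSpace m (iniFormSpace a V) :=
      IniGrob.iniSpace_mono m h1
    rw [hM, hK2] at hmono
    have hss : IniGrob.expSet m V ⊆ IniGrob.expSet mR V :=
      IniGrob.expSet_subset_of_le hmono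
    have heq : IniGrob.expSet m V = IniGrob.expSet mR V :=
      Set.Subset.antisymm hss (IniGrob.expSet_antisymm m mR V hss)
    have hspaces : iniSpace m V = iniSpace mR V := by
      rw [IniGrob.iniSpace_eq_span, IniGrob.iniSpace_eq_span, heq]
    exact IniGrob.eq_of_le_of_iniSpace_eq m h1 (by rw [hM, hK2, ← hspaces])
  · have hmono : iniSpace m (iniFormSpace a V) ≤ iniSpace m (iniSpace m V) :=
      IniGrob.iniSpace_mono m h1
    rw [hM, hK2] at hmono
    have hss : IniGrob.expSet mR V ⊆ IniGrob.expSet m V :=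
      IniGrob.expSet_subset_of_le hmono
    have heq : IniGrob.expSet mR V = IniGrob.expSet m V :=
      Set.Subset.antisymm hss (IniGrob.expSet_antisymm mR m V hss)
    have hspaces : iniSpace mR V = iniSpace m V := by
      rw [IniGrob.iniSpace_eq_span, IniGrob.iniSpace_eq_span, heq]
    exact (IniGrob.eq_of_le_of_iniSpace_eq m h1 (by rw [hM, hK2, hspaces])).symm

/-- For a positive weight `a` and monomial order `τ`: if `in_τ(V) ⊆ in_a(V)` or
`in_τ(V) ⊇ in_a(V)`, then `in_τ(V) = in_a(V)`. -/
theorem iniSpace_eq_iniFormSpace {K : Type*} [Field K] {n : ℕ} (a : Fin n → ℕ)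
    (ha : ∀ i, 0 < a i) (m : MonomialOrder (Fin n))
    (V : Submodule K (MvPolynomial (Fin n) K))
    (h : iniSpace m V ≤ iniFormSpace a V ∨ iniFormSpace a V ≤ iniSpace m V) :
    iniSpace m V = iniFormSpace a V := by
  exact iniSpace_eq_iniFormSpace' a m V h
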